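/- Let d ≥ 2 and let A, B, C be d×d complex matrices with equal diagonals such that every entry of A is a nonnegative real number, B and C are Hermitian, and √(A_ii·A_jj)/(d−1) + √(A_ij·A_ji) − |B_ij| − |C_ij| ≥ 0 for all i ≠ j. Then the map Φ^{(3)}_{(A,B,C)} is decomposable: there exist positive semidefinite matrices P, Q ∈ M_d(ℂ)⊗M_d(ℂ) with X^{(3)}_{(A,B,C)} = P + Q^Γ. In particular, Φ^{(3)}_{(A,B,C)} is positive. -/

import Mathlib

open Matrix
open scoped ComplexOrder

/-- The LDOI matrix `X^{(3)}_{(A,B,C)}` associated to a triple of `d × d` matrices;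
it is the Choi matrix of the DOC map `Φ^{(3)}_{(A,B,C)}`. -/
def X3 {d : ℕ} (A B C : Matrix (Fin d) (Fin d) ℂ) :
    Matrix (Fin d × Fin d) (Fin d × Fin d) ℂ :=
  Matrix.of fun p q =>
    if p.1 = q.1 ∧ p.2 = q.2 then A p.1 p.2
    else if p.1 = p.2 ∧ q.1 = q.2 then B p.1 q.1
    else if p.1 = q.2 ∧ p.2 = q.1 then C p.1 q.1
    else 0

/-- The partial transpose (on the second factor) of a bipartite matrix:
`⟨ik|X^Γ|jl⟩ = ⟨il|X|jk⟩`. -/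
def partialTranspose {d : ℕ} (X : Matrix (Fin d × Fin d) (Fin d × Fin d) ℂ) :
    Matrix (Fin d × Fin d) (Fin d × Fin d) ℂ :=
  Matrix.of fun p q => X (p.1, q.2) (q.1, p.2)

/-- The DOC map `Φ^{(3)}_{(A,B,C)}`:
`Φ(Z) = Diag(A z) + B̃ ⊙ Z + C̃ ⊙ Zᵀ`, where `z = diag Z` and `B̃, C̃` are `B, C`
with their diagonals set to zero. -/
noncomputable def Phi3 {d : ℕ} (A B C : Matrix (Fin d) (Fin d) ℂ)
    (Z : Matrix (Fin d) (Fin d) ℂ) : Matrix (Fin d) (Fin d) ℂ :=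
  Matrix.diagonal (fun i => ∑ j, A i j * Z j j) +
    (Matrix.of fun i j => if i = j then 0 else B i j) ⊙ Z +
    (Matrix.of fun i j => if i = j then 0 else C i j) ⊙ Zᵀ


/-!
Spread each diagonal weight `A_ii` evenly over the `d - 1` pairs `{i, j}`. Then the quadratic
form of `X^{(3)}` is a sum over pairs of two `2 × 2` Hermitian forms: one on `(ii, jj)` with
diagonal shares `A_ii/(d-1)`, `A_jj/(d-1)` and coupling `B_ij`, one on `(ij, ji)` with diagonal
`A_ij`, `A_ji` and coupling `C_ij`. Such a form with diagonal `a, b ≥ 0` is positive once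
`|c|² ≤ ab`. The partial transpose exchanges the roles of `B` and `C`, so writing
`α = √(A_ii A_jj)/(d-1)`, `τ = √(A_ij A_ji)` and splitting `B_ij`, `C_ij` and both diagonal shares
between `P` and `Q` with the weights `t = α/(α+τ)`, `u = |C_ij|/(α+τ)` turns every `2 × 2`
condition into a consequence of `|B_ij| + |C_ij| ≤ α + τ`. Finally, the map with Choi matrix
`P + Q^Γ` is `Z ↦ Φ_P(Z) + Φ_Q(Zᵀ)`, and `Φ_P(Z)` is a compression of `P ⊗ Z`.
-/

open Finset ComplexConjugate

lemma two_mul_le_of_sq_le_mul {a b s x y : ℝ} (ha : 0 ≤ a) (hb : 0 ≤ b) (hs : 0 ≤ s)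
    (hx : 0 ≤ x) (hy : 0 ≤ y) (h : s ^ 2 ≤ a * b) : 2 * s * x * y ≤ a * x ^ 2 + b * y ^ 2 := by
  have hsab : s ≤ √a * √b := by
    rw [← Real.sqrt_mul ha, ← Real.sqrt_sq hs]
    exact Real.sqrt_le_sqrt h
  nlinarith [sq_nonneg (√a * x - √b * y), Real.sq_sqrt ha, Real.sq_sqrt hb,
    mul_le_mul_of_nonneg_right hsab (mul_nonneg hx hy)]

lemma two_by_two_form_nonneg {a b : ℝ} {c : ℂ} (ha : 0 ≤ a) (hb : 0 ≤ b)
    (hc : ‖c‖ ^ 2 ≤ a * b) (u w : ℂ) :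
    0 ≤ a * (conj u * u) + c * (conj u * w) + (b * (conj w * w) + conj c * (conj w * u)) := by
  have hreal : a * (conj u * u) + c * (conj u * w) + (b * (conj w * w) + conj c * (conj w * u))
      = ((a * ‖u‖ ^ 2 + b * ‖w‖ ^ 2 + 2 * (c * (conj u * w)).re : ℝ) : ℂ) := by
    have hsum := Complex.add_conj (c * (conj u * w))
    simp only [map_mul, Complex.conj_conj] at hsum
    rw [Complex.ofReal_add, ← hsum]
    push_cast
    rw [Complex.conj_mul', Complex.conj_mul']
    ring
  rw [hreal, Complex.zero_le_real]
  have hcross : -(‖c‖ * ‖u‖ * ‖w‖) ≤ (c * (conj u * w)).re := by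
    simpa [mul_assoc] using (abs_le.mp (Complex.abs_re_le_norm (c * (conj u * w)))).1
  linarith [two_mul_le_of_sq_le_mul ha hb (norm_nonneg c) (norm_nonneg u) (norm_nonneg w) hc]

lemma pair_weight_bounds {α τ β γ t u : ℝ} (hα : 0 ≤ α) (hτ : 0 ≤ τ) (hβ : 0 ≤ β) (hγ : 0 ≤ γ)
    (h : β + γ ≤ α + τ) (ht : t = α / (α + τ)) (hu : u = γ / (α + τ)) :
    (0 ≤ t ∧ t ≤ 1) ∧ (0 ≤ u ∧ u ≤ 1) ∧
      t * β ≤ (1 - u) * α ∧ (1 - t) * γ ≤ u * τ ∧ t * γ ≤ u * α ∧ (1 - t) * β ≤ (1 - u) * τ := by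
  subst ht hu
  rcases (add_nonneg hα hτ).eq_or_lt with hs | hs
  · obtain ⟨rfl, rfl⟩ : α = 0 ∧ τ = 0 := ⟨by linarith, by linarith⟩
    obtain ⟨rfl, rfl⟩ : β = 0 ∧ γ = 0 := ⟨by linarith, by linarith⟩
    norm_num
  · have h1t : 1 - α / (α + τ) = τ / (α + τ) := by field_simp; ring
    have h1u : 1 - γ / (α + τ) = (α + τ - γ) / (α + τ) := by field_simp
    rw [h1t, h1u]
    refine ⟨⟨by positivity, (div_le_one hs).mpr (by linarith)⟩,
      ⟨by positivity, (div_le_one hs).mpr (by linarith)⟩, ?_, ?_, ?_, ?_⟩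
    all_goals
      rw [div_mul_eq_mul_div, div_mul_eq_mul_div, div_le_div_iff_of_pos_right hs]
      nlinarith

lemma norm_ofReal_mul_sq_le {w c m : ℝ} {z : ℂ} (hw : 0 ≤ w) (hm : 0 ≤ m)
    (h : w * ‖z‖ ≤ c * √m) : ‖(w : ℂ) * z‖ ^ 2 ≤ c ^ 2 * m := by
  rw [norm_mul, Complex.norm_real, Real.norm_of_nonneg hw]
  calc (w * ‖z‖) ^ 2 ≤ (c * √m) ^ 2 := pow_le_pow_left₀ (by positivity) h 2
    _ = c ^ 2 * m := by rw [mul_pow, Real.sq_sqrt hm]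

lemma sqrt_div_mul_div {x y c : ℝ} (hc : 0 < c) : √(x / c * (y / c)) = √(x * y) / c := by
  rw [div_mul_div_comm, Real.sqrt_div' _ (by positivity), Real.sqrt_mul_self hc.le]

section PairForms

variable {ι : Type*} [Fintype ι]

theorem Matrix.posSemidef_of_dotProduct_mulVec_nonneg [DecidableEq ι] {M : Matrix ι ι ℂ}
    (h : ∀ x, 0 ≤ star x ⬝ᵥ M *ᵥ x) : M.PosSemidef := by
  refine .of_dotProduct_mulVec_nonneg ?_ h
  rw [← isSymmetric_toEuclideanLin_iff, LinearMap.isSymmetric_iff_inner_map_self_real]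
  intro x
  rw [EuclideanSpace.inner_eq_star_dotProduct, dotProduct_star, Complex.conj_eq_iff_im,
    dotProduct_comm]
  simpa using (Complex.nonneg_iff.mp (h x.ofLp)).2.symm

lemma sum_offDiag_nonneg_of_pair (f : ι × ι → ℂ) (h : ∀ i j, i ≠ j → 0 ≤ f (i, j) + f (j, i)) :
    0 ≤ ∑ p ∈ univ.offDiag, f p := by
  have hswap : ∑ p ∈ univ.offDiag, f p.swap = ∑ p ∈ univ.offDiag, f p :=
    sum_nbij' Prod.swap Prod.swap (by simp [eq_comm]) (by simp [eq_comm]) (by simp) (by simp)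
      fun _ _ => rfl
  have hdouble : 0 ≤ ∑ p ∈ univ.offDiag, (f p + f p.swap) :=
    sum_nonneg fun p hp => h p.1 p.2 (mem_offDiag.mp hp).2.2
  rw [sum_add_distrib, hswap] at hdouble
  simpa [← mul_two] using mul_nonneg hdouble (Complex.zero_le_real.mpr (by norm_num : (0:ℝ) ≤ 1/2))

lemma sum_offDiag_pairForm_nonneg {δ : ι → ι → ℝ} {c : ι → ι → ℂ}
    (hδ : ∀ i j, i ≠ j → 0 ≤ δ i j) (hc : ∀ i j, i ≠ j → c j i = conj (c i j))
    (hδc : ∀ i j, i ≠ j → ‖c i j‖ ^ 2 ≤ δ i j * δ j i) (u : ι → ι → ℂ) :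
    0 ≤ ∑ p ∈ univ.offDiag, (δ p.1 p.2 * (conj (u p.1 p.2) * u p.1 p.2)
        + c p.1 p.2 * (conj (u p.1 p.2) * u p.2 p.1)) :=
  sum_offDiag_nonneg_of_pair _ fun i j hij => by
    simpa only [hc i j hij] using
      two_by_two_form_nonneg (hδ i j hij) (hδ j i hij.symm) (hδc i j hij) (u i j) (u j i)

variable [DecidableEq ι]

lemma sum_offDiag_eq_sum_sum_erase {M : Type*} [AddCommMonoid M] (f : ι × ι → M) :
    ∑ p ∈ univ.offDiag, f p = ∑ i, ∑ j ∈ univ.erase i, f (i, j) :=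
  sum_finset_product _ _ _ fun p => by simp [ne_comm]

def withRowSumDiag (δ : ι → ι → ℝ) (M : Matrix ι ι ℂ) : Matrix ι ι ℂ :=
  of fun i j => if i = j then ((∑ k ∈ univ.erase i, δ i k : ℝ) : ℂ) else M i j

lemma withRowSumDiag_add (δ δ' : ι → ι → ℝ) (M M' : Matrix ι ι ℂ) :
    withRowSumDiag δ M + withRowSumDiag δ' M' = withRowSumDiag (δ + δ') (M + M') := by
  ext i j
  by_cases hij : i = j <;> simp [withRowSumDiag, hij, sum_add_distrib]

lemma withRowSumDiag_posSemidef {δ : ι → ι → ℝ} {M : Matrix ι ι ℂ}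
    (hδ : ∀ i j, i ≠ j → 0 ≤ δ i j) (hM : ∀ i j, i ≠ j → M j i = conj (M i j))
    (hδM : ∀ i j, i ≠ j → ‖M i j‖ ^ 2 ≤ δ i j * δ j i) :
    (withRowSumDiag δ M).PosSemidef := by
  refine posSemidef_of_dotProduct_mulVec_nonneg fun y => ?_
  have row : ∀ i, (withRowSumDiag δ M *ᵥ y) i
      = ∑ j ∈ univ.erase i, ((δ i j : ℂ) * y i + M i j * y j) := by
    intro i
    rw [mulVec, dotProduct, ← add_sum_erase _ _ (mem_univ i), sum_add_distrib, ← sum_mul]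
    simp only [withRowSumDiag, of_apply, if_true, Complex.ofReal_sum]
    exact congrArg _ (sum_congr rfl fun j hj => by rw [if_neg (ne_of_mem_erase hj).symm])
  convert sum_offDiag_pairForm_nonneg hδ hM hδM (fun i _ => y i) using 1
  simp only [dotProduct, row, sum_offDiag_eq_sum_sum_erase, mul_sum, Pi.star_apply,
    RCLike.star_def]
  exact sum_congr rfl fun i _ => sum_congr rfl fun j _ => by ring

def diagLift (M : Matrix ι ι ℂ) : Matrix (ι × ι) (ι × ι) ℂ :=
  of fun p q => if p.1 = p.2 ∧ q.1 = q.2 then M p.1 q.1 else 0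

lemma diagLift_posSemidef {M : Matrix ι ι ℂ} (hM : M.PosSemidef) : (diagLift M).PosSemidef := by
  refine posSemidef_of_dotProduct_mulVec_nonneg fun x => ?_
  convert hM.dotProduct_mulVec_nonneg (fun i => x (i, i)) using 1
  simp [dotProduct, mulVec, diagLift, Fintype.sum_prod_type, ite_and, mul_sum]

def swapBlocks (a : ι → ι → ℝ) (C : Matrix ι ι ℂ) : Matrix (ι × ι) (ι × ι) ℂ :=
  of fun p q => if p.1 = p.2 then 0
    else if q = p then (a p.1 p.2 : ℂ) else if q = p.swap then C p.1 p.2 else 0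

lemma swapBlocks_posSemidef {a : ι → ι → ℝ} {C : Matrix ι ι ℂ}
    (ha : ∀ i j, i ≠ j → 0 ≤ a i j) (hC : ∀ i j, i ≠ j → C j i = conj (C i j))
    (haC : ∀ i j, i ≠ j → ‖C i j‖ ^ 2 ≤ a i j * a j i) : (swapBlocks a C).PosSemidef := by
  refine posSemidef_of_dotProduct_mulVec_nonneg fun x => ?_
  have row : ∀ p, (swapBlocks a C *ᵥ x) p
      = if p.1 = p.2 then 0 else (a p.1 p.2 : ℂ) * x p + C p.1 p.2 * x p.swap := by
    rintro ⟨i, j⟩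
    by_cases hij : i = j
    · simp [mulVec, dotProduct, swapBlocks, hij]
    · have hswap : (i, j) ≠ (j, i) := by simp [hij]
      rw [mulVec, dotProduct, Fintype.sum_eq_add _ _ hswap]
      · simp [swapBlocks, hij, hswap.symm]
      · intro q hq
        simp [swapBlocks, hij, hq.1, hq.2]
  convert sum_offDiag_pairForm_nonneg ha hC haC (fun i j => x (i, j)) using 1
  rw [dotProduct, ← sum_subset (subset_univ univ.offDiag) fun p _ hp => ?_]
  · refine sum_congr rfl fun p hp => ?_
    rw [row, if_neg (mem_offDiag.mp hp).2.2]
    simp only [Pi.star_apply, RCLike.star_def, Prod.swap]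
    ring
  · rw [row, if_pos (by simpa using hp), mul_zero]

end PairForms

section Choi

variable {n m : Type*} [Fintype m]

def mapOfChoi (X : Matrix (n × m) (n × m) ℂ) (Z : Matrix m m ℂ) : Matrix n n ℂ :=
  of fun k l => ∑ i, ∑ j, X (k, i) (l, j) * Z i j

lemma mapOfChoi_add (X Y : Matrix (n × m) (n × m) ℂ) (Z : Matrix m m ℂ) :
    mapOfChoi (X + Y) Z = mapOfChoi X Z + mapOfChoi Y Z := by
  ext k l
  simp [mapOfChoi, add_mul, sum_add_distrib]

variable [Fintype n] [DecidableEq n] [DecidableEq m]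

open scoped Kronecker in
lemma mapOfChoi_eq_conjTranspose_kronecker_mul (X : Matrix (n × m) (n × m) ℂ)
    (Z : Matrix m m ℂ) :
    let V : Matrix ((n × m) × m) n ℂ := of fun p l => if p.1.1 = l ∧ p.1.2 = p.2 then 1 else 0
    mapOfChoi X Z = Vᴴ * (X ⊗ₖ Z) * V := by
  ext k l
  simp [mapOfChoi, mul_apply, Fintype.sum_prod_type, ite_and, apply_ite (starRingEnd ℂ)]
  exact sum_comm

lemma mapOfChoi_posSemidef {X : Matrix (n × m) (n × m) ℂ} {Z : Matrix m m ℂ}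
    (hX : X.PosSemidef) (hZ : Z.PosSemidef) : (mapOfChoi X Z).PosSemidef := by
  rw [mapOfChoi_eq_conjTranspose_kronecker_mul]
  exact (hX.kronecker hZ).conjTranspose_mul_mul_same _

end Choi

section LDOI

variable {d : ℕ}

lemma X3_add (A B C A' B' C' : Matrix (Fin d) (Fin d) ℂ) :
    X3 A B C + X3 A' B' C' = X3 (A + A') (B + B') (C + C') := by
  ext p q
  simp only [X3, of_apply, Matrix.add_apply]
  split_ifs <;> simp

lemma partialTranspose_X3 (A B C : Matrix (Fin d) (Fin d) ℂ) :
    partialTranspose (X3 A B C) = X3 A C B := by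
  ext ⟨i, k⟩ ⟨j, l⟩
  simp only [partialTranspose, X3, of_apply]
  split_ifs <;> grind

lemma mapOfChoi_partialTranspose (Q : Matrix (Fin d × Fin d) (Fin d × Fin d) ℂ)
    (Z : Matrix (Fin d) (Fin d) ℂ) : mapOfChoi (partialTranspose Q) Z = mapOfChoi Q Zᵀ := by
  ext k l
  simp only [mapOfChoi, partialTranspose, of_apply, transpose_apply]
  exact sum_comm

lemma Phi3_eq_mapOfChoi (A B C : Matrix (Fin d) (Fin d) ℂ) :
    Phi3 A B C = mapOfChoi (X3 A B C) := by
  ext Z k l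
  rcases eq_or_ne k l with rfl | hkl
  · simp only [Phi3, mapOfChoi, X3, diagonal, hadamard, of_apply, Matrix.add_apply, ↓reduceIte,
      zero_mul, add_zero, transpose_apply, true_and, ite_mul]
    refine sum_congr rfl fun j _ => ?_
    rw [Fintype.sum_eq_single j fun i hij => by grind]
    simp
  · rw [mapOfChoi, of_apply, ← Fintype.sum_prod_type',
      Fintype.sum_eq_add (k, l) (l, k) (by simp [hkl])]
    · simp [Phi3, X3, diagonal, hadamard, hkl, hkl.symm]
    · rintro ⟨i, j⟩ hij
      simp only [X3, of_apply, ite_mul, zero_mul]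
      grind

lemma X3_withRowSumDiag (δ a : Fin d → Fin d → ℝ) (B C : Matrix (Fin d) (Fin d) ℂ) :
    X3 (withRowSumDiag δ (of fun i j => (a i j : ℂ))) B C
      = diagLift (withRowSumDiag δ B) + swapBlocks a C := by
  ext ⟨i, k⟩ ⟨j, l⟩
  simp only [X3, diagLift, swapBlocks, withRowSumDiag, of_apply, Matrix.add_apply, Prod.mk.injEq,
    Prod.swap_prod_mk]
  split_ifs <;> grind

lemma X3_withRowSumDiag_posSemidef {δ a : Fin d → Fin d → ℝ} {B C : Matrix (Fin d) (Fin d) ℂ}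
    (hδ : ∀ i j, i ≠ j → 0 ≤ δ i j) (ha : ∀ i j, i ≠ j → 0 ≤ a i j)
    (hB : ∀ i j, i ≠ j → B j i = conj (B i j)) (hC : ∀ i j, i ≠ j → C j i = conj (C i j))
    (hδB : ∀ i j, i ≠ j → ‖B i j‖ ^ 2 ≤ δ i j * δ j i)
    (haC : ∀ i j, i ≠ j → ‖C i j‖ ^ 2 ≤ a i j * a j i) :
    (X3 (withRowSumDiag δ (of fun i j => (a i j : ℂ))) B C).PosSemidef := by
  rw [X3_withRowSumDiag]
  exact (diagLift_posSemidef (withRowSumDiag_posSemidef hδ hB hδB)).add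
    (swapBlocks_posSemidef ha hC haC)

lemma X3_weighted_posSemidef {r : Fin d → ℝ} {a t u : Fin d → Fin d → ℝ}
    {B C : Matrix (Fin d) (Fin d) ℂ} (hr : ∀ i, 0 ≤ r i) (ha : ∀ i j, 0 ≤ a i j)
    (ht : ∀ i j, i ≠ j → 0 ≤ t i j ∧ t i j ≤ 1) (hu : ∀ i j, i ≠ j → 0 ≤ u i j ∧ u i j ≤ 1)
    (ht_symm : ∀ i j, t j i = t i j) (hu_symm : ∀ i j, u j i = u i j)
    (hB : ∀ i j, i ≠ j → B j i = conj (B i j)) (hC : ∀ i j, i ≠ j → C j i = conj (C i j))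
    (hBr : ∀ i j, i ≠ j → t i j * ‖B i j‖ ≤ (1 - u i j) * √(r i * r j))
    (hCa : ∀ i j, i ≠ j → (1 - t i j) * ‖C i j‖ ≤ u i j * √(a i j * a j i)) :
    (X3 (withRowSumDiag (fun i k => (1 - u i k) * r i) (of fun i j => ((u i j * a i j : ℝ) : ℂ)))
      ((of fun i j => (t i j : ℂ)) ⊙ B)
      ((of fun i j => ((1 - t i j : ℝ) : ℂ)) ⊙ C)).PosSemidef := by
  refine X3_withRowSumDiag_posSemidef (fun i j hij => ?_) (fun i j hij => ?_) (fun i j hij => ?_)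
    (fun i j hij => ?_) (fun i j hij => ?_) (fun i j hij => ?_)
  · exact mul_nonneg (sub_nonneg.mpr (hu i j hij).2) (hr i)
  · exact mul_nonneg (hu i j hij).1 (ha i j)
  · simp [ht_symm, hB i j hij]
  · simp [ht_symm, hC i j hij]
  · calc ‖(t i j : ℂ) * B i j‖ ^ 2 ≤ (1 - u i j) ^ 2 * (r i * r j) :=
          norm_ofReal_mul_sq_le (ht i j hij).1 (mul_nonneg (hr i) (hr j)) (hBr i j hij)
      _ = (1 - u i j) * r i * ((1 - u j i) * r j) := by rw [hu_symm]; ring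
  · calc ‖((1 - t i j : ℝ) : ℂ) * C i j‖ ^ 2 ≤ u i j ^ 2 * (a i j * a j i) :=
          norm_ofReal_mul_sq_le (sub_nonneg.mpr (ht i j hij).2)
            (mul_nonneg (ha i j) (ha j i)) (hCa i j hij)
      _ = u i j * a i j * (u j i * a j i) := by rw [hu_symm]; ring

theorem X3_withRowSumDiag_decomposable {r : Fin d → ℝ} {a : Fin d → Fin d → ℝ}
    {B C : Matrix (Fin d) (Fin d) ℂ} (hr : ∀ i, 0 ≤ r i) (ha : ∀ i j, 0 ≤ a i j)
    (hB : ∀ i j, i ≠ j → B j i = conj (B i j)) (hC : ∀ i j, i ≠ j → C j i = conj (C i j))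
    (hBC : ∀ i j, i ≠ j → ‖B i j‖ + ‖C i j‖ ≤ √(r i * r j) + √(a i j * a j i)) :
    ∃ P Q : Matrix (Fin d × Fin d) (Fin d × Fin d) ℂ, P.PosSemidef ∧ Q.PosSemidef ∧
      X3 (withRowSumDiag (fun i _ => r i) (of fun i j => (a i j : ℂ))) B C
        = P + partialTranspose Q := by
  set α : Fin d → Fin d → ℝ := fun i j => √(r i * r j)
  set τ : Fin d → Fin d → ℝ := fun i j => √(a i j * a j i)
  set t : Fin d → Fin d → ℝ := fun i j => α i j / (α i j + τ i j)
  set u : Fin d → Fin d → ℝ := fun i j => ‖C i j‖ / (α i j + τ i j)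
  have hw i j (hij : i ≠ j) := pair_weight_bounds (Real.sqrt_nonneg (r i * r j))
    (Real.sqrt_nonneg (a i j * a j i)) (norm_nonneg (B i j)) (norm_nonneg (C i j)) (hBC i j hij)
    rfl rfl
  choose ht01 hu01 hPB hPC hQC hQB using hw
  have hC_norm i j : ‖C j i‖ = ‖C i j‖ := by
    rcases eq_or_ne i j with rfl | hij
    · rfl
    · rw [hC i j hij, Complex.norm_conj]
  have ht_symm i j : t j i = t i j := by simp only [t, α, τ, mul_comm]
  have hu_symm i j : u j i = u i j := by simp only [u, α, τ, mul_comm, hC_norm]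
  refine ⟨_, _, X3_weighted_posSemidef hr ha ht01 hu01 ht_symm hu_symm hB hC hPB hPC,
    X3_weighted_posSemidef (u := fun i j => 1 - u i j) (B := C) (C := B) hr ha ht01
      (fun i j hij => ⟨sub_nonneg.mpr (hu01 i j hij).2, by linarith [(hu01 i j hij).1]⟩)
      ht_symm (fun i j => by rw [hu_symm]) hC hB
      (fun i j hij => by rw [sub_sub_cancel]; exact hQC i j hij) hQB, ?_⟩
  rw [partialTranspose_X3, X3_add, withRowSumDiag_add]
  congr 1
  · congr 1
    · ext i k
      simp only [sub_sub_cancel, Pi.add_apply]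
      ring
    · ext i j
      simp only [of_apply, Complex.ofReal_mul, Complex.ofReal_sub, Complex.ofReal_one,
        Matrix.add_apply]
      ring
  all_goals
    ext i j
    simp only [Complex.ofReal_sub, Complex.ofReal_one, Matrix.add_apply, hadamard_apply, of_apply]
    ring

lemma eq_withRowSumDiag_div (hd : 2 ≤ d) {A : Matrix (Fin d) (Fin d) ℂ}
    (hA : ∀ i j, (A i j).im = 0) :
    A = withRowSumDiag (fun i _ => (A i i).re / ((d : ℝ) - 1))
      (of fun i j => ((A i j).re : ℂ)) := by
  have hd1 : ((d : ℝ) - 1) ≠ 0 := by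
    have : (2 : ℝ) ≤ d := by exact_mod_cast hd
    linarith
  ext i j
  rcases eq_or_ne i j with rfl | hij
  · rw [withRowSumDiag, of_apply, if_pos rfl, sum_const, card_erase_of_mem (mem_univ i),
      card_univ, Fintype.card_fin, nsmul_eq_mul, Nat.cast_sub (by omega), Nat.cast_one,
      mul_div_cancel₀ _ hd1]
    exact Complex.ext rfl (hA i i)
  · rw [withRowSumDiag, of_apply, if_neg hij, of_apply]
    exact Complex.ext rfl (hA i j)

end LDOI

theorem stmt18_general {d : ℕ} (hd : 2 ≤ d) (A B C : Matrix (Fin d) (Fin d) ℂ)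
    (hA : ∀ i j, (A i j).im = 0 ∧ 0 ≤ (A i j).re)
    (hB : B.IsHermitian) (hC : C.IsHermitian)
    (hineq : ∀ i j, i ≠ j →
      0 ≤ Real.sqrt ((A i i).re * (A j j).re) / ((d : ℝ) - 1)
            + Real.sqrt ((A i j).re * (A j i).re)
            - ‖B i j‖ - ‖C i j‖) :
    (∃ P Q : Matrix (Fin d × Fin d) (Fin d × Fin d) ℂ,
        P.PosSemidef ∧ Q.PosSemidef ∧ X3 A B C = P + partialTranspose Q) ∧
    (∀ Z : Matrix (Fin d) (Fin d) ℂ, Z.PosSemidef → (Phi3 A B C Z).PosSemidef) := by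
  have hd1 : (0 : ℝ) < d - 1 := by
    have : (2 : ℝ) ≤ d := by exact_mod_cast hd
    linarith
  obtain ⟨P, Q, hP, hQ, hX⟩ := X3_withRowSumDiag_decomposable
    (fun i => div_nonneg (hA i i).2 hd1.le) (fun i j => (hA i j).2)
    (fun i j _ => (hB.apply j i).symm) (fun i j _ => (hC.apply j i).symm)
    (fun i j hij => by rw [sqrt_div_mul_div hd1]; linarith [hineq i j hij])
  rw [← eq_withRowSumDiag_div hd fun i j => (hA i j).1] at hX
  refine ⟨⟨P, Q, hP, hQ, hX⟩, fun Z hZ => ?_⟩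
  rw [Phi3_eq_mapOfChoi, hX, mapOfChoi_add, mapOfChoi_partialTranspose]
  exact (mapOfChoi_posSemidef hP hZ).add (mapOfChoi_posSemidef hQ hZ.transpose)

theorem stmt18 {d : ℕ} (hd : 2 ≤ d) (A B C : Matrix (Fin d) (Fin d) ℂ)
    (hdiag : ∀ i, A i i = B i i ∧ A i i = C i i)
    (hA : ∀ i j, (A i j).im = 0 ∧ 0 ≤ (A i j).re)
    (hB : B.IsHermitian) (hC : C.IsHermitian)
    (hineq : ∀ i j, i ≠ j →
      0 ≤ Real.sqrt ((A i i).re * (A j j).re) / ((d : ℝ) - 1)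
            + Real.sqrt ((A i j).re * (A j i).re)
            - ‖B i j‖ - ‖C i j‖) :
    (∃ P Q : Matrix (Fin d × Fin d) (Fin d × Fin d) ℂ,
        P.PosSemidef ∧ Q.PosSemidef ∧ X3 A B C = P + partialTranspose Q) ∧
    (∀ Z : Matrix (Fin d) (Fin d) ℂ, Z.PosSemidef → (Phi3 A B C Z).PosSemidef) :=
  stmt18_general hd A B C hA hB hC hineq
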